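/- arXiv:1907.02830 — 8 statements merged into one kernel-verified Lean document; each statement's English description precedes it below -/
import Mathlib

section
/- Let p_i, p_j, p_k, p_l be points in ℝ^d and let w_j, w_k, w_l be nonzero reals such that w_j(p_i - p_j) + w_k(p_i - p_k) + w_l(p_i - p_l) = 0. Then the point q := (w_j/(w_j + w_k)) • p_j + (w_k/(w_j + w_k)) • p_k (assuming w_j + w_k ≠ 0) lies on the affine line through p_i and p_l. -/
theorem weighted_sum_eq_of_equilibrium {K V : Type*} [Field K] [AddCommGroup V] [Module K V]
    {pi pj pk pl : V} {wj wk wl : K}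
    (heq : wj • (pi - pj) + wk • (pi - pk) + wl • (pi - pl) = 0) :
    wj • pj + wk • pk = (wj + wk) • pi - wl • (pl - pi) := by
  linear_combination (norm := module) -heq

theorem weighted_average_eq_add_smul_sub_of_equilibrium {K V : Type*} [Field K] [AddCommGroup V]
    [Module K V] {pi pj pk pl : V} {wj wk wl : K} (hsum : wj + wk ≠ 0)
    (heq : wj • (pi - pj) + wk • (pi - pk) + wl • (pi - pl) = 0) :
    (wj / (wj + wk)) • pj + (wk / (wj + wk)) • pk = pi + (-wl / (wj + wk)) • (pl - pi) := by
  calc (wj / (wj + wk)) • pj + (wk / (wj + wk)) • pk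
      = (wj + wk)⁻¹ • (wj • pj + wk • pk) := by
        simp only [div_eq_inv_mul, smul_add, mul_smul]
    _ = pi + (-wl / (wj + wk)) • (pl - pi) := by
        rw [weighted_sum_eq_of_equilibrium heq, smul_sub, smul_smul, inv_mul_cancel₀ hsum,
          one_smul, smul_smul, neg_div, neg_smul, div_eq_inv_mul, sub_eq_add_neg]

theorem stmt_0_general (d : ℕ) (pi pj pk pl : Fin d → ℝ) (wj wk wl : ℝ)
    (hsum : wj + wk ≠ 0)
    (heq : wj • (pi - pj) + wk • (pi - pk) + wl • (pi - pl) = 0) :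
    ∃ t : ℝ, (wj / (wj + wk)) • pj + (wk / (wj + wk)) • pk = pi + t • (pl - pi) :=
  ⟨_, weighted_average_eq_add_smul_sub_of_equilibrium hsum heq⟩

/-- At a trivalent vertex in equilibrium, the explicit affine combination
`(w_j/(w_j+w_k)) • p_j + (w_k/(w_j+w_k)) • p_k` lies on the line through `p_i` and `p_l`. -/
theorem stmt_0 (d : ℕ) (pi pj pk pl : Fin d → ℝ) (wj wk wl : ℝ)
    (hwj : wj ≠ 0) (hwk : wk ≠ 0) (hwl : wl ≠ 0) (hsum : wj + wk ≠ 0)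
    (heq : wj • (pi - pj) + wk • (pi - pk) + wl • (pi - pl) = 0) :
    ∃ t : ℝ, (wj / (wj + wk)) • pj + (wk / (wj + wk)) • pk = pi + t • (pl - pi) :=
  stmt_0_general d pi pj pk pl wj wk wl hsum heq
end

section
/- Let p_i, p_j, p_k, p_l be points in ℝ^d with p_j ≠ p_k, and let w_j, w_k, w_l be nonzero reals with w_j + w_k ≠ 0 satisfying the equilibrium condition w_j(p_i - p_j) + w_k(p_i - p_k) + w_l(p_i - p_l) = 0. If q is the point on the line through p_j and p_k that also lies on the line through p_i and p_l, and p_j - q = r • (q - p_k) for some real r, then r = w_k / w_j. -/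
/-!
Rewriting the equilibrium condition as
`(wj • pj + wk • pk) / (wj + wk) = pi - (wl / (wj + wk)) • (pl - pi)` shows that the point dividing
the segment `pj pk` in the ratio `wk : wj` also lies on the line `pi pl`, so it is `q`; the affine
ratio of that point is `wk / wj`.
-/

open AffineMap

section
variable {K V : Type*} [Field K] [AddCommGroup V] [Module K V]

theorem lineMap_eq_add_smul_sub (a b : V) (c : K) : lineMap a b c = a + c • (b - a) :=
  (lineMap_apply_module' a b c).trans (add_comm _ _)

theorem eq_mul_one_sub_of_sub_lineMap_eq_smul {a b : V} (hab : a ≠ b) {c r : K}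
    (h : a - lineMap a b c = r • (lineMap a b c - b)) : c = r * (1 - c) := by
  rw [← vsub_eq_sub, ← vsub_eq_sub, left_vsub_lineMap, lineMap_vsub_right, smul_smul] at h
  exact smul_left_injective K (vsub_ne_zero.2 hab) h

theorem lineMap_eq_add_smul_sub_of_equilibrium {p a b l : V} {wa wb wl : K} (hsum : wa + wb ≠ 0)
    (heq : wa • (p - a) + wb • (p - b) + wl • (p - l) = 0) :
    lineMap a b (wb / (wa + wb)) = p + (-wl / (wa + wb)) • (l - p) := by
  apply smul_right_injective V hsum
  simp only [lineMap_eq_add_smul_sub, smul_add, smul_smul, mul_div_cancel₀ _ hsum]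
  linear_combination (norm := module) -heq

end

theorem stmt_1_general (d : ℕ) (pi pj pk pl : Fin d → ℝ) (wj wk wl : ℝ)
    (hjk : pj ≠ pk)
    (hwj : wj ≠ 0) (hsum : wj + wk ≠ 0)
    (heq : wj • (pi - pj) + wk • (pi - pk) + wl • (pi - pl) = 0)
    (q : Fin d → ℝ)
    (huniq : ∀ q' : Fin d → ℝ, (∃ s : ℝ, q' = pj + s • (pk - pj)) →
      (∃ t : ℝ, q' = pi + t • (pl - pi)) → q' = q)
    (r : ℝ) (hr : pj - q = r • (q - pk)) :
    r = wk / wj := by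
  have hq : lineMap pj pk (wk / (wj + wk)) = q :=
    huniq _ ⟨_, lineMap_eq_add_smul_sub _ _ _⟩
      ⟨_, lineMap_eq_add_smul_sub_of_equilibrium hsum heq⟩
  have hratio := eq_mul_one_sub_of_sub_lineMap_eq_smul hjk (hq ▸ hr)
  rw [one_sub_div hsum, add_sub_cancel_right, mul_div_assoc', div_left_inj' hsum] at hratio
  rw [hratio, mul_div_cancel_right₀ _ hwj]

/-- The affine ratio at the intersection of the lines `p_j p_k` and `p_i p_l`
at a trivalent equilibrium vertex equals `w_k / w_j`. -/
theorem stmt_1 (d : ℕ) (pi pj pk pl : Fin d → ℝ) (wj wk wl : ℝ)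
    (hjk : pj ≠ pk)
    (hwj : wj ≠ 0) (hwk : wk ≠ 0) (hwl : wl ≠ 0) (hsum : wj + wk ≠ 0)
    (heq : wj • (pi - pj) + wk • (pi - pk) + wl • (pi - pl) = 0)
    (q : Fin d → ℝ)
    (hq1 : ∃ s : ℝ, q = pj + s • (pk - pj))
    (hq2 : ∃ t : ℝ, q = pi + t • (pl - pi))
    (huniq : ∀ q' : Fin d → ℝ, (∃ s : ℝ, q' = pj + s • (pk - pj)) →
      (∃ t : ℝ, q' = pi + t • (pl - pi)) → q' = q)
    (r : ℝ) (hr : pj - q = r • (q - pk)) :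
    r = wk / wj :=
  stmt_1_general d pi pj pk pl wj wk wl hjk hwj hsum heq q huniq r hr
end

section
/- Let p₁, p₂, p₃ ∈ ℝ² be affinely independent points and e₁, e₂, e₃ ∈ ℝ² with e_i ≠ p_i. Suppose there exist nonzero reals w₁₂, w₂₃, w₃₁ and nonzero reals u₁, u₂, u₃ such that equilibrium holds at each vertex: u₁(p₁ - e₁) + w₁₂(p₁ - p₂) + w₃₁(p₁ - p₃) = 0, u₂(p₂ - e₂) + w₁₂(p₂ - p₁) + w₂₃(p₂ - p₃) = 0, u₃(p₃ - e₃) + w₂₃(p₃ - p₂) + w₃₁(p₃ - p₁) = 0. Then the three lines through p_i and e_i (i = 1,2,3) are concurrent. -/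
/-!
Write `D = w₁₂ w₂₃ + w₂₃ w₃₁ + w₃₁ w₁₂`. The common point of the force lines is the weighted
average `c = D⁻¹ (w₃₁ w₁₂ p₁ + w₁₂ w₂₃ p₂ + w₂₃ w₃₁ p₃)`, each vertex weighted by the product of
the tensions of its two cycle edges. Equilibrium at `p₁` gives
`c - p₁ = (w₂₃ / D) (w₁₂ (p₂ - p₁) + w₃₁ (p₃ - p₁)) = (w₂₃ u₁ / D) (p₁ - e₁)`,
so `c` lies on the line `p₁ e₁`, and likewise at the other vertices by cyclic symmetry.
If `D = 0`, the equilibria at `p₁` and `p₂` make `e₁ - p₁` and `e₂ - p₂` parallel.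
-/

def stressDet {R : Type*} [CommRing R] (w₁₂ w₂₃ w₃₁ : R) : R :=
  w₁₂ * w₂₃ + w₂₃ * w₃₁ + w₃₁ * w₁₂

lemma stressDet_rotate {R : Type*} [CommRing R] (w₁₂ w₂₃ w₃₁ : R) :
    stressDet w₂₃ w₃₁ w₁₂ = stressDet w₁₂ w₂₃ w₃₁ := by
  unfold stressDet; ring

section StressCentre

variable {K V : Type*} [Field K] [AddCommGroup V] [Module K V]

def stressCentre (p₁ p₂ p₃ : V) (w₁₂ w₂₃ w₃₁ : K) : V :=
  (stressDet w₁₂ w₂₃ w₃₁)⁻¹ • ((w₃₁ * w₁₂) • p₁ + (w₁₂ * w₂₃) • p₂ + (w₂₃ * w₃₁) • p₃)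

lemma stressCentre_rotate (p₁ p₂ p₃ : V) (w₁₂ w₂₃ w₃₁ : K) :
    stressCentre p₂ p₃ p₁ w₂₃ w₃₁ w₁₂ = stressCentre p₁ p₂ p₃ w₁₂ w₂₃ w₃₁ := by
  unfold stressCentre
  rw [stressDet_rotate]
  congr 1
  abel

lemma stressCentre_eq_add_smul_of_equilibrium {p₁ p₂ p₃ e₁ : V} {w₁₂ w₂₃ w₃₁ u₁ : K}
    (hD : stressDet w₁₂ w₂₃ w₃₁ ≠ 0)
    (heq : u₁ • (p₁ - e₁) + w₁₂ • (p₁ - p₂) + w₃₁ • (p₁ - p₃) = 0) :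
    stressCentre p₁ p₂ p₃ w₁₂ w₂₃ w₃₁ =
      p₁ + (-(w₂₃ * u₁) / stressDet w₁₂ w₂₃ w₃₁) • (e₁ - p₁) := by
  unfold stressCentre
  rw [inv_smul_eq_iff₀ hD, smul_add, smul_smul, mul_div_cancel₀ _ hD]
  unfold stressDet
  linear_combination (norm := module) -w₂₃ • heq

lemma smul_sub_eq_smul_sub_of_stressDet_eq_zero {p₁ p₂ p₃ e₁ e₂ : V} {w₁₂ w₂₃ w₃₁ u₁ u₂ : K}
    (hD : stressDet w₁₂ w₂₃ w₃₁ = 0)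
    (heq₁ : u₁ • (p₁ - e₁) + w₁₂ • (p₁ - p₂) + w₃₁ • (p₁ - p₃) = 0)
    (heq₂ : u₂ • (p₂ - e₂) + w₁₂ • (p₂ - p₁) + w₂₃ • (p₂ - p₃) = 0) :
    ((w₁₂ + w₃₁) * u₂) • (e₂ - p₂) = (-(w₁₂ * u₁)) • (e₁ - p₁) := by
  unfold stressDet at hD
  linear_combination (norm := module) -(w₁₂ + w₃₁) • heq₂ - w₁₂ • heq₁ + hD • (p₂ - p₃)

lemma stressDet_ne_zero {p₁ p₂ p₃ e₁ e₂ : V} {w₁₂ w₂₃ w₃₁ u₁ u₂ : K}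
    (hpar : ¬ ∃ k : K, e₂ - p₂ = k • (e₁ - p₁))
    (hw₁₂ : w₁₂ ≠ 0) (hw₃₁ : w₃₁ ≠ 0) (hu₂ : u₂ ≠ 0)
    (heq₁ : u₁ • (p₁ - e₁) + w₁₂ • (p₁ - p₂) + w₃₁ • (p₁ - p₃) = 0)
    (heq₂ : u₂ • (p₂ - e₂) + w₁₂ • (p₂ - p₁) + w₂₃ • (p₂ - p₃) = 0) :
    stressDet w₁₂ w₂₃ w₃₁ ≠ 0 := by
  intro hD
  have hsum : w₁₂ + w₃₁ ≠ 0 := by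
    intro hsum
    have : w₃₁ * w₁₂ = 0 := by
      unfold stressDet at hD
      linear_combination hD - w₂₃ * hsum
    exact mul_ne_zero hw₃₁ hw₁₂ this
  have hpar' := smul_sub_eq_smul_sub_of_stressDet_eq_zero hD heq₁ heq₂
  refine hpar ⟨((w₁₂ + w₃₁) * u₂)⁻¹ * -(w₁₂ * u₁), ?_⟩
  rw [mul_smul, ← hpar', inv_smul_smul₀ (mul_ne_zero hsum hu₂)]

end StressCentre

theorem stmt_5_general (p₁ p₂ p₃ e₁ e₂ e₃ : Fin 2 → ℝ)
    (hpar₁₂ : ¬ ∃ k : ℝ, e₂ - p₂ = k • (e₁ - p₁))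
    (w₁₂ w₂₃ w₃₁ u₁ u₂ u₃ : ℝ)
    (hw₁₂ : w₁₂ ≠ 0) (hw₃₁ : w₃₁ ≠ 0)
    (hu₂ : u₂ ≠ 0)
    (heq₁ : u₁ • (p₁ - e₁) + w₁₂ • (p₁ - p₂) + w₃₁ • (p₁ - p₃) = 0)
    (heq₂ : u₂ • (p₂ - e₂) + w₁₂ • (p₂ - p₁) + w₂₃ • (p₂ - p₃) = 0)
    (heq₃ : u₃ • (p₃ - e₃) + w₂₃ • (p₃ - p₂) + w₃₁ • (p₃ - p₁) = 0) :
    ∃ c : Fin 2 → ℝ,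
      (∃ s : ℝ, c = p₁ + s • (e₁ - p₁)) ∧
      (∃ s : ℝ, c = p₂ + s • (e₂ - p₂)) ∧
      (∃ s : ℝ, c = p₃ + s • (e₃ - p₃)) := by
  have hD := stressDet_ne_zero hpar₁₂ hw₁₂ hw₃₁ hu₂ heq₁ heq₂
  have hD' : stressDet w₂₃ w₃₁ w₁₂ ≠ 0 := by rwa [stressDet_rotate]
  have hD'' : stressDet w₃₁ w₁₂ w₂₃ ≠ 0 := by rwa [stressDet_rotate, stressDet_rotate]
  refine ⟨stressCentre p₁ p₂ p₃ w₁₂ w₂₃ w₃₁,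
    ⟨_, stressCentre_eq_add_smul_of_equilibrium hD heq₁⟩, ?_, ?_⟩
  · rw [← stressCentre_rotate]
    exact ⟨_, stressCentre_eq_add_smul_of_equilibrium hD' (by rwa [add_right_comm])⟩
  · rw [← stressCentre_rotate, ← stressCentre_rotate]
    exact ⟨_, stressCentre_eq_add_smul_of_equilibrium hD'' (by rwa [add_right_comm])⟩

/-- A framed triangle in the plane admitting an everywhere non-zero self-stress
has concurrent external force lines (assuming they are pairwise non-parallel). -/
theorem stmt_5 (p₁ p₂ p₃ e₁ e₂ e₃ : Fin 2 → ℝ)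
    (hind : AffineIndependent ℝ ![p₁, p₂, p₃])
    (he₁ : e₁ ≠ p₁) (he₂ : e₂ ≠ p₂) (he₃ : e₃ ≠ p₃)
    (hpar₁₂ : ¬ ∃ k : ℝ, e₂ - p₂ = k • (e₁ - p₁))
    (hpar₂₃ : ¬ ∃ k : ℝ, e₃ - p₃ = k • (e₂ - p₂))
    (hpar₃₁ : ¬ ∃ k : ℝ, e₁ - p₁ = k • (e₃ - p₃))
    (w₁₂ w₂₃ w₃₁ u₁ u₂ u₃ : ℝ)
    (hw₁₂ : w₁₂ ≠ 0) (hw₂₃ : w₂₃ ≠ 0) (hw₃₁ : w₃₁ ≠ 0)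
    (hu₁ : u₁ ≠ 0) (hu₂ : u₂ ≠ 0) (hu₃ : u₃ ≠ 0)
    (heq₁ : u₁ • (p₁ - e₁) + w₁₂ • (p₁ - p₂) + w₃₁ • (p₁ - p₃) = 0)
    (heq₂ : u₂ • (p₂ - e₂) + w₁₂ • (p₂ - p₁) + w₂₃ • (p₂ - p₃) = 0)
    (heq₃ : u₃ • (p₃ - e₃) + w₂₃ • (p₃ - p₂) + w₃₁ • (p₃ - p₁) = 0) :
    ∃ c : Fin 2 → ℝ,
      (∃ s : ℝ, c = p₁ + s • (e₁ - p₁)) ∧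
      (∃ s : ℝ, c = p₂ + s • (e₂ - p₂)) ∧
      (∃ s : ℝ, c = p₃ + s • (e₃ - p₃)) :=
  stmt_5_general p₁ p₂ p₃ e₁ e₂ e₃ hpar₁₂ w₁₂ w₂₃ w₃₁ u₁ u₂ u₃ hw₁₂ hw₃₁ hu₂ heq₁ heq₂ heq₃
end

section
/- Let p₁, p₂, p₃ ∈ ℝ² be affinely independent, let e₁, e₂, e₃ ∈ ℝ² with e_i ∉ affineSpan{p_j, p_k} for {i,j,k} = {1,2,3} arrangement as needed, and suppose the three lines p_i e_i pass through a common point c not lying on any of the lines p_i p_j. Then there exist nonzero reals w₁₂, w₂₃, w₃₁, u₁, u₂, u₃ satisfying the equilibrium conditions u₁(p₁ - e₁) + w₁₂(p₁ - p₂) + w₃₁(p₁ - p₃) = 0, u₂(p₂ - e₂) + w₁₂(p₂ - p₁) + w₂₃(p₂ - p₃) = 0, u₃(p₃ - e₃) + w₂₃(p₃ - p₂) + w₃₁(p₃ - p₁) = 0. -/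
/-!
Write `c = a₁ p₁ + a₂ p₂ + a₃ p₃` in barycentric coordinates. Since `c` lies on no side line,
every `aᵢ` is non-zero, and `c - pᵢ = sᵢ (eᵢ - pᵢ)` with `sᵢ ≠ 0`. Expanding `c - p₁` as
`a₂ (p₂ - p₁) + a₃ (p₃ - p₁)` and multiplying by `a₁` gives equilibrium at `p₁` with frame weight
`s₁ a₁` and edge weights `-a₁ a₂`, `-a₁ a₃`; the edge weight `-aᵢ aⱼ` is symmetric in `i, j`,
so the three vertex equilibria fit together into one self-stress.
-/

theorem exists_barycentric_coords_of_finrank_eq_two {k V : Type*} [Field k] [AddCommGroup V]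
    [Module k V] [FiniteDimensional k V] (hV : Module.finrank k V = 2) {p₁ p₂ p₃ : V}
    (hind : AffineIndependent k ![p₁, p₂, p₃]) (c : V) :
    ∃ a₁ a₂ a₃ : k, a₁ + a₂ + a₃ = 1 ∧ c = a₁ • p₁ + a₂ • p₂ + a₃ • p₃ := by
  have htop : affineSpan k (Set.range ![p₁, p₂, p₃]) = ⊤ := by
    rw [hind.affineSpan_eq_top_iff_card_eq_finrank_add_one, hV, Fintype.card_fin]
  let b : AffineBasis (Fin 3) k V := ⟨![p₁, p₂, p₃], hind, htop⟩
  refine ⟨b.coord 0 c, b.coord 1 c, b.coord 2 c, ?_, ?_⟩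
  · simpa only [Fin.sum_univ_three] using b.sum_coord_apply_eq_one c
  · have hcomb := b.linear_combination_coord_eq_self c
    rw [Fin.sum_univ_three] at hcomb
    exact hcomb.symm

section AffineSpanPair

variable {k V : Type*} [Ring k] [AddCommGroup V] [Module k V]

theorem smul_add_smul_mem_affineSpan_pair {a b : k} (h : a + b = 1) (p q : V) :
    a • p + b • q ∈ line[k, p, q] := by
  have hline := AffineMap.lineMap_mem_affineSpan_pair b p q
  rwa [AffineMap.lineMap_apply_module, ← eq_sub_of_add_eq h] at hline

theorem barycentric_coord_ne_zero_of_notMem_affineSpan_pair {p q r c : V} {a b b' : k}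
    (hsum : a + b + b' = 1) (hc : c = a • p + b • q + b' • r) (hqr : c ∉ line[k, q, r]) :
    a ≠ 0 := by
  rintro rfl
  rw [zero_smul, zero_add] at hc
  rw [zero_add] at hsum
  exact hqr (hc ▸ smul_add_smul_mem_affineSpan_pair hsum q r)

theorem ne_zero_of_eq_add_smul_of_notMem_affineSpan_pair {p q e c : V} {s : k}
    (hs : c = p + s • (e - p)) (hpq : c ∉ line[k, p, q]) : s ≠ 0 := by
  rintro rfl
  rw [zero_smul, add_zero] at hs
  exact hpq (hs ▸ left_mem_affineSpan_pair k p q)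

end AffineSpanPair

theorem vertex_equilibrium {k V : Type*} [CommRing k] [AddCommGroup V] [Module k V]
    {p q r e c : V} {a b b' s : k} (hsum : a + b + b' = 1) (hc : c = a • p + b • q + b' • r)
    (hs : c = p + s • (e - p)) :
    (s * a) • (p - e) + (-(a * b)) • (p - q) + (-(b' * a)) • (p - r) = 0 := by
  have hp : (a + b + b') • p = (1 : k) • p := by rw [hsum]
  linear_combination (norm := module) a • hs - a • hc - a • hp

theorem stmt_6_general (p₁ p₂ p₃ e₁ e₂ e₃ : Fin 2 → ℝ)
    (hind : AffineIndependent ℝ ![p₁, p₂, p₃])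
    (c : Fin 2 → ℝ)
    (hc₁ : ∃ s : ℝ, c = p₁ + s • (e₁ - p₁))
    (hc₂ : ∃ s : ℝ, c = p₂ + s • (e₂ - p₂))
    (hc₃ : ∃ s : ℝ, c = p₃ + s • (e₃ - p₃))
    (hc₁₂ : c ∉ affineSpan ℝ ({p₁, p₂} : Set (Fin 2 → ℝ)))
    (hc₂₃ : c ∉ affineSpan ℝ ({p₂, p₃} : Set (Fin 2 → ℝ)))
    (hc₃₁ : c ∉ affineSpan ℝ ({p₃, p₁} : Set (Fin 2 → ℝ))) :
    ∃ w₁₂ w₂₃ w₃₁ u₁ u₂ u₃ : ℝ,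
      w₁₂ ≠ 0 ∧ w₂₃ ≠ 0 ∧ w₃₁ ≠ 0 ∧ u₁ ≠ 0 ∧ u₂ ≠ 0 ∧ u₃ ≠ 0 ∧
      u₁ • (p₁ - e₁) + w₁₂ • (p₁ - p₂) + w₃₁ • (p₁ - p₃) = 0 ∧
      u₂ • (p₂ - e₂) + w₁₂ • (p₂ - p₁) + w₂₃ • (p₂ - p₃) = 0 ∧
      u₃ • (p₃ - e₃) + w₂₃ • (p₃ - p₂) + w₃₁ • (p₃ - p₁) = 0 := by
  obtain ⟨s₁, hs₁⟩ := hc₁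
  obtain ⟨s₂, hs₂⟩ := hc₂
  obtain ⟨s₃, hs₃⟩ := hc₃
  obtain ⟨a₁, a₂, a₃, hsum₁, hbary₁⟩ :=
    exists_barycentric_coords_of_finrank_eq_two (by simp) hind c
  have hsum₂ : a₂ + a₃ + a₁ = 1 := by linarith
  have hsum₃ : a₃ + a₁ + a₂ = 1 := by linarith
  have hbary₂ : c = a₂ • p₂ + a₃ • p₃ + a₁ • p₁ := by rw [hbary₁]; abel
  have hbary₃ : c = a₃ • p₃ + a₁ • p₁ + a₂ • p₂ := by rw [hbary₁]; abel
  have ha₁ := barycentric_coord_ne_zero_of_notMem_affineSpan_pair hsum₁ hbary₁ hc₂₃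
  have ha₂ := barycentric_coord_ne_zero_of_notMem_affineSpan_pair hsum₂ hbary₂ hc₃₁
  have ha₃ := barycentric_coord_ne_zero_of_notMem_affineSpan_pair hsum₃ hbary₃ hc₁₂
  have hs₁0 := ne_zero_of_eq_add_smul_of_notMem_affineSpan_pair hs₁ hc₁₂
  have hs₂0 := ne_zero_of_eq_add_smul_of_notMem_affineSpan_pair hs₂ hc₂₃
  have hs₃0 := ne_zero_of_eq_add_smul_of_notMem_affineSpan_pair hs₃ hc₃₁
  refine ⟨-(a₁ * a₂), -(a₂ * a₃), -(a₃ * a₁), s₁ * a₁, s₂ * a₂, s₃ * a₃,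
    neg_ne_zero.2 (mul_ne_zero ha₁ ha₂), neg_ne_zero.2 (mul_ne_zero ha₂ ha₃),
    neg_ne_zero.2 (mul_ne_zero ha₃ ha₁), mul_ne_zero hs₁0 ha₁, mul_ne_zero hs₂0 ha₂,
    mul_ne_zero hs₃0 ha₃, vertex_equilibrium hsum₁ hbary₁ hs₁, ?_, ?_⟩
  · rw [add_right_comm]
    exact vertex_equilibrium hsum₂ hbary₂ hs₂
  · rw [add_right_comm]
    exact vertex_equilibrium hsum₃ hbary₃ hs₃

/-- If the three framing lines of a framed triangle in the plane are concurrent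
in a point in general position, then the framework admits an everywhere
non-zero self-stress. -/
theorem stmt_6 (p₁ p₂ p₃ e₁ e₂ e₃ : Fin 2 → ℝ)
    (hind : AffineIndependent ℝ ![p₁, p₂, p₃])
    (he₁ : e₁ ∉ affineSpan ℝ ({p₂, p₃} : Set (Fin 2 → ℝ)))
    (he₂ : e₂ ∉ affineSpan ℝ ({p₃, p₁} : Set (Fin 2 → ℝ)))
    (he₃ : e₃ ∉ affineSpan ℝ ({p₁, p₂} : Set (Fin 2 → ℝ)))
    (hne₁ : e₁ ≠ p₁) (hne₂ : e₂ ≠ p₂) (hne₃ : e₃ ≠ p₃)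
    (c : Fin 2 → ℝ)
    (hc₁ : ∃ s : ℝ, c = p₁ + s • (e₁ - p₁))
    (hc₂ : ∃ s : ℝ, c = p₂ + s • (e₂ - p₂))
    (hc₃ : ∃ s : ℝ, c = p₃ + s • (e₃ - p₃))
    (hc₁₂ : c ∉ affineSpan ℝ ({p₁, p₂} : Set (Fin 2 → ℝ)))
    (hc₂₃ : c ∉ affineSpan ℝ ({p₂, p₃} : Set (Fin 2 → ℝ)))
    (hc₃₁ : c ∉ affineSpan ℝ ({p₃, p₁} : Set (Fin 2 → ℝ))) :
    ∃ w₁₂ w₂₃ w₃₁ u₁ u₂ u₃ : ℝ,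
      w₁₂ ≠ 0 ∧ w₂₃ ≠ 0 ∧ w₃₁ ≠ 0 ∧ u₁ ≠ 0 ∧ u₂ ≠ 0 ∧ u₃ ≠ 0 ∧
      u₁ • (p₁ - e₁) + w₁₂ • (p₁ - p₂) + w₃₁ • (p₁ - p₃) = 0 ∧
      u₂ • (p₂ - e₂) + w₁₂ • (p₂ - p₁) + w₂₃ • (p₂ - p₃) = 0 ∧
      u₃ • (p₃ - e₃) + w₂₃ • (p₃ - p₂) + w₃₁ • (p₃ - p₁) = 0 :=
  stmt_6_general p₁ p₂ p₃ e₁ e₂ e₃ hind c hc₁ hc₂ hc₃ hc₁₂ hc₂₃ hc₃₁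
end

section
/- Let G be a connected finite simple graph and G(P) a framework in ℝ^d that is linearly generic, meaning: at every vertex of degree k, the k edge vectors span a (k-1)-dimensional linear subspace and any k-1 of them already span that subspace. Then any two self-stresses w, w' on G(P) are proportional: there exists λ ∈ ℝ with w' = λ • w, provided w is non-zero. -/
/-!
At a vertex of degree `k`, the rank hypothesis says that any `k - 1` of the `k` edge vectors are
linearly independent, so a linear dependency among them that vanishes at one edge vanishes
everywhere. Two self-stresses restrict to such dependencies, hence are proportional at every vertex
of degree `> 1`, and a stress that is non-zero on one edge at a vertex is non-zero on all of them.
The factor of proportionality thus passes from an edge to all adjacent edges, and by connectedness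
it is the same on the whole graph.
-/

open Module Submodule Finset

theorem Finset.sum_smul_sub_eq_zero_iff {K M ι : Type*} [Ring K] [AddCommGroup M] [Module K M]
    (s : Finset ι) (a : ι → K) (p : ι → M) (x : ι) :
    ∑ u ∈ s, a u • (p x - p u) = 0 ↔ ∑ u ∈ s, a u • (p u - p x) = 0 := by
  rw [← neg_eq_zero, ← sum_neg_distrib]
  simp only [← smul_neg, neg_sub]

section GenericDependency

variable {K M ι : Type*} [DivisionRing K] [AddCommGroup M] [Module K M]
  {S : Finset ι} {f : ι → M} {u : ι}

theorem linearIndepOn_diff_singleton_of_finrank_span_eq_card_sub_one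
    (hrank : finrank K (span K (f '' S)) = #S - 1) (hu : u ∈ S)
    (hsub : span K (f '' (↑S \ {u})) = span K (f '' S)) :
    LinearIndepOn K f (↑S \ {u}) := by
  classical
  rw [LinearIndepOn, linearIndependent_iff_card_eq_finrank_span, Set.finrank,
    ← Set.image_eq_range, hsub, hrank, ← Set.toFinset_card]
  simp [card_sdiff_of_subset, hu]

theorem eq_zero_of_sum_smul_eq_zero_of_eq_zero
    (hrank : finrank K (span K (f '' S)) = #S - 1) (hu : u ∈ S)
    (hsub : span K (f '' (↑S \ {u})) = span K (f '' S))
    {c : ι → K} (hc : ∑ i ∈ S, c i • f i = 0) (hcu : c u = 0) :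
    ∀ i ∈ S, c i = 0 := by
  classical
  have hindep : LinearIndepOn K f ↑(S.erase u) := by
    rw [coe_erase]
    exact linearIndepOn_diff_singleton_of_finrank_span_eq_card_sub_one hrank hu hsub
  rw [← add_sum_erase S _ hu, hcu, zero_smul, zero_add] at hc
  intro i hi
  obtain rfl | hiu := eq_or_ne i u
  · exact hcu
  · exact linearIndepOn_finset_iff.mp hindep c hc i (mem_erase.mpr ⟨hiu, hi⟩)

theorem eq_mul_of_sum_smul_eq_zero
    (hrank : finrank K (span K (f '' S)) = #S - 1) (hu : u ∈ S)
    (hsub : span K (f '' (↑S \ {u})) = span K (f '' S))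
    {a b : ι → K} (ha : ∑ i ∈ S, a i • f i = 0) (hb : ∑ i ∈ S, b i • f i = 0)
    {l : K} (hl : b u = l * a u) :
    ∀ i ∈ S, b i = l * a i := by
  have hc : ∑ i ∈ S, (b i - l * a i) • f i = 0 := by
    simp only [sub_smul, mul_smul, sum_sub_distrib, ← smul_sum, ha, hb, smul_zero, sub_zero]
  intro i hi
  exact sub_eq_zero.mp
    (eq_zero_of_sum_smul_eq_zero_of_eq_zero hrank hu hsub hc (sub_eq_zero.mpr hl) i hi)

theorem ne_zero_of_sum_smul_eq_zero
    (hrank : finrank K (span K (f '' S)) = #S - 1)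
    (hsub : ∀ u ∈ S, span K (f '' (↑S \ {u})) = span K (f '' S))
    {a : ι → K} (ha : ∑ i ∈ S, a i • f i = 0) (hu : u ∈ S) (hau : a u ≠ 0) :
    ∀ i ∈ S, a i ≠ 0 :=
  fun i hi hai => hau (eq_zero_of_sum_smul_eq_zero_of_eq_zero hrank hi (hsub i hi) ha hai u hu)

end GenericDependency

theorem SimpleGraph.Preconnected.forall_of_adj {V : Type*} {G : SimpleGraph V}
    (hG : G.Preconnected) {P : V → Prop} (hstep : ∀ x y, G.Adj x y → P x → P y)
    {x : V} (hx : P x) (y : V) : P y := by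
  obtain ⟨q⟩ := hG x y
  induction q with
  | nil => exact hx
  | cons h _ ih => exact ih (hstep _ _ h hx)

namespace SimpleGraph

variable {V K E : Type*} [DivisionRing K] [AddCommGroup E] [Module K E]
  {G : SimpleGraph V} [G.LocallyFinite] {p : V → E} {w w' : V → V → K} {l : K} {x y : V}

theorem eq_of_mem_neighborFinset_of_degree_le_one (hdeg : G.degree x ≤ 1) (hxy : G.Adj x y)
    {u : V} (hu : u ∈ G.neighborFinset x) : u = y :=
  card_le_one.mp hdeg u hu y ((mem_neighborFinset G x y).mpr hxy)

theorem stress_ne_zero_and_eq_mul_of_adj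
    (hrank : finrank K (span K ((fun u => p u - p x) '' (G.neighborFinset x : Set V))) =
      G.degree x - 1)
    (hsub : ∀ u ∈ G.neighborFinset x,
      span K ((fun v => p v - p x) '' ((G.neighborFinset x : Set V) \ {u})) =
        span K ((fun v => p v - p x) '' (G.neighborFinset x : Set V)))
    (hw : 1 < G.degree x → ∑ u ∈ G.neighborFinset x, w x u • (p x - p u) = 0)
    (hw' : 1 < G.degree x → ∑ u ∈ G.neighborFinset x, w' x u • (p x - p u) = 0)
    (hxy : G.Adj x y) (hwxy : w x y ≠ 0) (hl : w' x y = l * w x y) :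
    ∀ u ∈ G.neighborFinset x, w x u ≠ 0 ∧ w' x u = l * w x u := by
  intro u hu
  rcases le_or_gt (G.degree x) 1 with hdeg | hdeg
  · rw [eq_of_mem_neighborFinset_of_degree_le_one hdeg hxy hu]
    exact ⟨hwxy, hl⟩
  · have hy : y ∈ G.neighborFinset x := (mem_neighborFinset G x y).mpr hxy
    have ha := (sum_smul_sub_eq_zero_iff _ _ _ _).mp (hw hdeg)
    have hb := (sum_smul_sub_eq_zero_iff _ _ _ _).mp (hw' hdeg)
    exact ⟨ne_zero_of_sum_smul_eq_zero hrank hsub ha hy hwxy u hu,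
      eq_mul_of_sum_smul_eq_zero hrank hy (hsub y hy) ha hb hl u hu⟩

end SimpleGraph

theorem stmt_7_general (V : Type) [Fintype V] (G : SimpleGraph V)
    [DecidableRel G.Adj] (hconn : G.Connected)
    (d : ℕ) (p : V → Fin d → ℝ)
    (hgen_rank : ∀ v : V,
      Module.finrank ℝ ↥(Submodule.span ℝ
        ((fun u => p u - p v) '' (G.neighborFinset v : Set V))) = G.degree v - 1)
    (hgen_sub : ∀ v : V, ∀ u ∈ G.neighborFinset v,
      Submodule.span ℝ ((fun x => p x - p v) '' ((G.neighborFinset v : Set V) \ {u})) =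
        Submodule.span ℝ ((fun x => p x - p v) '' (G.neighborFinset v : Set V)))
    (w w' : V → V → ℝ)
    (hsymm : ∀ u v, w u v = w v u) (hsymm' : ∀ u v, w' u v = w' v u)
    (hsupp : ∀ u v, ¬ G.Adj u v → w u v = 0) (hsupp' : ∀ u v, ¬ G.Adj u v → w' u v = 0)
    (hself : ∀ v : V, 1 < G.degree v →
      ∑ u ∈ G.neighborFinset v, w v u • (p v - p u) = 0)
    (hself' : ∀ v : V, 1 < G.degree v →
      ∑ u ∈ G.neighborFinset v, w' v u • (p v - p u) = 0)
    (hnz : ∃ u v, G.Adj u v ∧ w u v ≠ 0) :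
    ∃ l : ℝ, ∀ u v : V, w' u v = l * w u v := by
  obtain ⟨u₀, v₀, h₀, hw₀⟩ := hnz
  set l := w' u₀ v₀ / w u₀ v₀
  refine ⟨l, ?_⟩
  have hlocal := fun x y => G.stress_ne_zero_and_eq_mul_of_adj (l := l)
    (hgen_rank x) (hgen_sub x) (hself x) (hself' x) (y := y)
  have hall : ∀ x, ∀ u ∈ G.neighborFinset x, w x u ≠ 0 ∧ w' x u = l * w x u := by
    refine hconn.preconnected.forall_of_adj (fun x y hxy hx => ?_)
      (hlocal u₀ v₀ h₀ hw₀ (div_mul_cancel₀ _ hw₀).symm)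
    obtain ⟨hne, heq⟩ := hx y ((G.mem_neighborFinset x y).mpr hxy)
    exact hlocal y x hxy.symm (hsymm x y ▸ hne) (by rw [hsymm' y x, heq, hsymm x y])
  intro u v
  by_cases huv : G.Adj u v
  · exact (hall u v ((G.mem_neighborFinset u v).mpr huv)).2
  · rw [hsupp u v huv, hsupp' u v huv, mul_zero]

/-- Uniqueness (up to a scalar) of self-stresses on a connected linearly generic
framework: any self-stress is proportional to a given non-zero one. -/
theorem stmt_7 (V : Type) [Fintype V] [DecidableEq V] (G : SimpleGraph V)
    [DecidableRel G.Adj] (hconn : G.Connected)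
    (d : ℕ) (p : V → Fin d → ℝ)
    (hgen_rank : ∀ v : V,
      Module.finrank ℝ ↥(Submodule.span ℝ
        ((fun u => p u - p v) '' (G.neighborFinset v : Set V))) = G.degree v - 1)
    (hgen_sub : ∀ v : V, ∀ u ∈ G.neighborFinset v,
      Submodule.span ℝ ((fun x => p x - p v) '' ((G.neighborFinset v : Set V) \ {u})) =
        Submodule.span ℝ ((fun x => p x - p v) '' (G.neighborFinset v : Set V)))
    (w w' : V → V → ℝ)
    (hsymm : ∀ u v, w u v = w v u) (hsymm' : ∀ u v, w' u v = w' v u)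
    (hsupp : ∀ u v, ¬ G.Adj u v → w u v = 0) (hsupp' : ∀ u v, ¬ G.Adj u v → w' u v = 0)
    (hself : ∀ v : V, 1 < G.degree v →
      ∑ u ∈ G.neighborFinset v, w v u • (p v - p u) = 0)
    (hself' : ∀ v : V, 1 < G.degree v →
      ∑ u ∈ G.neighborFinset v, w' v u • (p v - p u) = 0)
    (hnz : ∃ u v, G.Adj u v ∧ w u v ≠ 0) :
    ∃ l : ℝ, ∀ u v : V, w' u v = l * w u v :=
  stmt_7_general V G hconn d p hgen_rank hgen_sub w w' hsymm hsymm' hsupp hsupp' hself hself' hnz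
end

section
/- Let G(P) be a linearly generic framework of a connected graph G and let w be a non-zero self-stress on G(P). Then w is everywhere non-zero: w_{i,j} ≠ 0 for every edge (v_i; v_j) of G. -/
/-! A vanishing stress coefficient propagates. At a vertex `v` of degree `k > 1` linear
genericity makes any `k - 1` of the edge vectors linearly independent, so if equilibrium
at `v` has a zero coefficient on one edge, all the others vanish too; at a leaf there is
nothing to propagate. Since `G` is connected, one zero coefficient forces the whole stress
to vanish. -/

open Module Submodule

section LinearAlgebra

variable {ι R M : Type*} {f : ι → M} {s : Finset ι}

section OrzechProperty

variable [Semiring R] [OrzechProperty R] [Nontrivial R] [AddCommMonoid M] [Module R M]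

theorem linearIndepOn_of_finrank_span_eq_card (h : finrank R (span R (f '' s)) = s.card) :
    LinearIndepOn R f s := by
  rw [LinearIndepOn, linearIndependent_iff_card_eq_finrank_span, Set.finrank,
    ← Set.image_eq_range, h]
  exact Fintype.card_coe s

theorem linearIndepOn_erase_of_finrank_span_eq_card_sub_one [DecidableEq ι] {u : ι} (hu : u ∈ s)
    (hrank : finrank R (span R (f '' s)) = s.card - 1)
    (hspan : span R (f '' ((s : Set ι) \ {u})) = span R (f '' s)) :
    LinearIndepOn R f (s.erase u) :=
  linearIndepOn_of_finrank_span_eq_card <| by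
    rw [Finset.coe_erase, hspan, hrank, Finset.card_erase_of_mem hu]

end OrzechProperty

theorem LinearIndepOn.eq_zero_of_sum_smul_eq_zero_of_erase [Ring R] [AddCommGroup M] [Module R M]
    [DecidableEq ι] {u : ι} (hli : LinearIndepOn R f (s.erase u)) {c : ι → R}
    (hsum : ∑ x ∈ s, c x • f x = 0) (hcu : c u = 0) : ∀ x ∈ s, c x = 0 := by
  have hsum' : ∑ x ∈ s.erase u, c x • f x = 0 := by
    rw [Finset.sum_erase s (by rw [hcu, zero_smul]), hsum]
  intro x hx
  obtain rfl | hxu := eq_or_ne x u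
  · exact hcu
  · exact linearIndepOn_finset_iff.mp hli c hsum' x (Finset.mem_erase.mpr ⟨hxu, hx⟩)

end LinearAlgebra

theorem SimpleGraph.Preconnected.of_adj_of_propagates {V : Type*} {G : SimpleGraph V}
    (hG : G.Preconnected) {P : V → V → Prop} (symm : ∀ x y, P x y → P y x)
    (propagates : ∀ x y z, G.Adj x y → G.Adj x z → P x y → P x z)
    {a b : V} (hab : G.Adj a b) (h : P a b) {u v : V} (huv : G.Adj u v) : P u v := by
  obtain ⟨W⟩ := hG a u
  induction W generalizing b with
  | nil => exact propagates _ b v hab huv h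
  | cons hac _ ih => exact ih hac.symm (symm _ _ (propagates _ b _ hab hac h)) huv

theorem stress_eq_zero_of_adj_of_eq_zero {V K E : Type*} [Fintype V] {G : SimpleGraph V}
    [DecidableRel G.Adj] [Field K] [AddCommGroup E] [Module K E] {p : V → E} {w : V → V → K}
    {x y z : V}
    (hrank : finrank K (span K ((fun u => p u - p x) '' (G.neighborFinset x : Set V))) =
      G.degree x - 1)
    (hspan : span K ((fun u => p u - p x) '' ((G.neighborFinset x : Set V) \ {y})) =
      span K ((fun u => p u - p x) '' (G.neighborFinset x : Set V)))
    (hequil : 1 < G.degree x → ∑ u ∈ G.neighborFinset x, w x u • (p x - p u) = 0)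
    (hxy : G.Adj x y) (hxz : G.Adj x z) (h0 : w x y = 0) : w x z = 0 := by
  classical
  have hy : y ∈ G.neighborFinset x := (G.mem_neighborFinset x y).mpr hxy
  have hz : z ∈ G.neighborFinset x := (G.mem_neighborFinset x z).mpr hxz
  obtain hleaf | hdeg := le_or_gt (G.degree x) 1
  · rw [← G.card_neighborFinset_eq_degree] at hleaf
    rwa [Finset.card_le_one.mp hleaf z hz y hy]
  have hli := linearIndepOn_erase_of_finrank_span_eq_card_sub_one hy hrank hspan
  refine hli.eq_zero_of_sum_smul_eq_zero_of_erase ?_ h0 z hz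
  rw [← neg_eq_zero, ← Finset.sum_neg_distrib, ← hequil hdeg]
  simp only [← smul_neg, neg_sub]

theorem stmt_8_general (V : Type) [Fintype V] (G : SimpleGraph V)
    [DecidableRel G.Adj] (hconn : G.Connected)
    (d : ℕ) (p : V → Fin d → ℝ)
    (hgen_rank : ∀ v : V,
      Module.finrank ℝ ↥(Submodule.span ℝ
        ((fun u => p u - p v) '' (G.neighborFinset v : Set V))) = G.degree v - 1)
    (hgen_sub : ∀ v : V, ∀ u ∈ G.neighborFinset v,
      Submodule.span ℝ ((fun x => p x - p v) '' ((G.neighborFinset v : Set V) \ {u})) =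
        Submodule.span ℝ ((fun x => p x - p v) '' (G.neighborFinset v : Set V)))
    (w : V → V → ℝ)
    (hsymm : ∀ u v, w u v = w v u)
    (hself : ∀ v : V, 1 < G.degree v →
      ∑ u ∈ G.neighborFinset v, w v u • (p v - p u) = 0)
    (hnz : ∃ u v, G.Adj u v ∧ w u v ≠ 0) :
    ∀ u v : V, G.Adj u v → w u v ≠ 0 := by
  intro u v huv hw
  obtain ⟨a, b, hab, hwab⟩ := hnz
  refine hwab (hconn.preconnected.of_adj_of_propagates (P := fun x y => w x y = 0)
    (fun x y h => (hsymm y x).trans h) (fun x y z hxy hxz => ?_) huv hw hab)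
  exact stress_eq_zero_of_adj_of_eq_zero (hgen_rank x)
    (hgen_sub x y ((G.mem_neighborFinset x y).mpr hxy)) (hself x) hxy hxz

/-- A non-zero self-stress on a connected linearly generic framework is
everywhere non-zero. -/
theorem stmt_8 (V : Type) [Fintype V] [DecidableEq V] (G : SimpleGraph V)
    [DecidableRel G.Adj] (hconn : G.Connected)
    (d : ℕ) (p : V → Fin d → ℝ)
    (hgen_rank : ∀ v : V,
      Module.finrank ℝ ↥(Submodule.span ℝ
        ((fun u => p u - p v) '' (G.neighborFinset v : Set V))) = G.degree v - 1)
    (hgen_sub : ∀ v : V, ∀ u ∈ G.neighborFinset v,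
      Submodule.span ℝ ((fun x => p x - p v) '' ((G.neighborFinset v : Set V) \ {u})) =
        Submodule.span ℝ ((fun x => p x - p v) '' (G.neighborFinset v : Set V)))
    (w : V → V → ℝ)
    (hsymm : ∀ u v, w u v = w v u)
    (hsupp : ∀ u v, ¬ G.Adj u v → w u v = 0)
    (hself : ∀ v : V, 1 < G.degree v →
      ∑ u ∈ G.neighborFinset v, w v u • (p v - p u) = 0)
    (hnz : ∃ u v, G.Adj u v ∧ w u v ≠ 0) :
    ∀ u v : V, G.Adj u v → w u v ≠ 0 :=
  stmt_8_general V G hconn d p hgen_rank hgen_sub w hsymm hself hnz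
end

section
/- Let p₁, p₂, p₃, p₄ ∈ ℝ² be points in general position (no three collinear), and for each i let e_i ∈ ℝ² with e_i ≠ p_i, such that the line p_i e_i meets the diagonal line through p_{i-1} and p_{i+1} (indices mod 4) in a unique point q_i. Suppose there exist nonzero tensions w₁₂, w₂₃, w₃₄, w₄₁ on the cycle edges and nonzero u_i on the framing edges p_i e_i with equilibrium at each p_i: u_i(p_i - e_i) + w_{i-1,i}(p_i - p_{i-1}) + w_{i,i+1}(p_i - p_{i+1}) = 0. Then the cross-ratios satisfy cr(q₁, p₄, q₃, p₂) = cr(q₂, p₃, q₄, p₁), where cr(a,b,c,d) = ((a-b)/(b-c)) * ((c-d)/(d-a)) computed as ratios of collinear vectors. -/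
/-!
Equilibrium at `pᵢ` says that the framing direction `eᵢ - pᵢ` is parallel to
`w_{i-1,i} (p_{i-1} - pᵢ) + w_{i,i+1} (p_{i+1} - pᵢ)`, so the framing line meets the diagonal
in the weighted mean `qᵢ = (w_{i-1,i} p_{i-1} + w_{i,i+1} p_{i+1}) / (w_{i-1,i} + w_{i,i+1})`.
The cross-ratio of two weighted means of the same pair of points is read off the weights, and on
both diagonals it comes out as `w₁₂ w₃₄ / (w₂₃ w₄₁)`.
-/

section

variable {k V : Type*} [Field k] [AddCommGroup V] [Module k V]

theorem AffineIndependent.eq_zero_of_smul_sub_add_smul_sub {p a b : V}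
    (h : AffineIndependent k ![p, a, b]) {c d : k} (hcd : c • (a - p) + d • (b - p) = 0) :
    c = 0 ∧ d = 0 := by
  have hw := h.eq_zero_of_sum_eq_zero (s := Finset.univ) (w := ![-(c + d), c, d])
    (by simp [Fin.sum_univ_three])
    (by simp only [Fin.sum_univ_three, Matrix.cons_val_zero, Matrix.cons_val_one, Matrix.cons_val]
        linear_combination (norm := module) hcd)
  exact ⟨hw 1 (Finset.mem_univ _), hw 2 (Finset.mem_univ _)⟩

theorem add_smul_eq_of_equilibrium {p a b e z : V} {u wa wb s t : k}
    (h : AffineIndependent k ![p, a, b]) (hu : u ≠ 0)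
    (heq : u • (p - e) + wa • (p - a) + wb • (p - b) = 0)
    (hz₁ : z = p + s • (e - p)) (hz₂ : z = a + t • (b - a)) :
    wa + wb ≠ 0 ∧ (wa + wb) • z = wa • a + wb • b := by
  -- compare the coefficients of `z - p` in the basis `a - p, b - p`
  obtain ⟨ha, hb⟩ := h.eq_zero_of_smul_sub_add_smul_sub (c := u * (1 - t) + s * wa)
    (d := u * t + s * wb) <| by
      linear_combination (norm := module) (-u) • (hz₁.symm.trans hz₂) + (-s) • heq
  have hsum : u + s * (wa + wb) = 0 := by linear_combination ha + hb
  have hσ : wa + wb ≠ 0 := fun h ↦ hu (by simpa [h] using hsum)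
  have ht : t * (wa + wb) = wb :=
    mul_left_cancel₀ hu (by linear_combination (wa + wb) * hb - wb * hsum)
  exact ⟨hσ, by rw [hz₂]; linear_combination (norm := module) ht • (b - a)⟩

theorem mul_mul_eq_of_add_smul_eq {a b x y : V} {xa xb ya yb α β : k} (hab : a ≠ b)
    (hσx : xa + xb ≠ 0) (hx : (xa + xb) • x = xa • a + xb • b)
    (hσy : ya + yb ≠ 0) (hy : (ya + yb) • y = ya • a + yb • b)
    (hα : x - a = α • (a - y)) (hβ : y - b = β • (b - x)) :
    α * β * (xa * yb) = xb * ya := by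
  have hba : b - a ≠ 0 := sub_ne_zero.mpr hab.symm
  have hαw : (ya + yb) * xb + α * ((xa + xb) * yb) = 0 := by
    refine (smul_eq_zero.mp ?_).resolve_right hba
    linear_combination (norm := module) ((xa + xb) * (ya + yb)) • hα - (ya + yb) • hx -
      (α * (xa + xb)) • hy
  have hβw : (xa + xb) * ya + β * ((ya + yb) * xa) = 0 := by
    refine (smul_eq_zero.mp ?_).resolve_right hba
    linear_combination (norm := module) (xa + xb) • hy + (β * (ya + yb)) • hx -
      ((xa + xb) * (ya + yb)) • hβ
  refine mul_left_cancel₀ (mul_ne_zero hσx hσy) ?_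
  linear_combination ((ya + yb) * β * xa) * hαw - ((ya + yb) * xb) * hβw

end

theorem stmt_10_general (p₁ p₂ p₃ p₄ e₁ e₂ e₃ e₄ : Fin 2 → ℝ)
    (h₁₂₃ : AffineIndependent ℝ ![p₁, p₂, p₃]) (h₁₂₄ : AffineIndependent ℝ ![p₁, p₂, p₄])
    (h₁₃₄ : AffineIndependent ℝ ![p₁, p₃, p₄]) (h₂₃₄ : AffineIndependent ℝ ![p₂, p₃, p₄])
    (q₁ q₂ q₃ q₄ : Fin 2 → ℝ)
    -- q_i lies on the line p_i e_i and on the diagonal p_{i-1} p_{i+1}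
    (hq₁ : (∃ s : ℝ, q₁ = p₁ + s • (e₁ - p₁)) ∧ (∃ s : ℝ, q₁ = p₄ + s • (p₂ - p₄)))
    (hq₂ : (∃ s : ℝ, q₂ = p₂ + s • (e₂ - p₂)) ∧ (∃ s : ℝ, q₂ = p₁ + s • (p₃ - p₁)))
    (hq₃ : (∃ s : ℝ, q₃ = p₃ + s • (e₃ - p₃)) ∧ (∃ s : ℝ, q₃ = p₂ + s • (p₄ - p₂)))
    (hq₄ : (∃ s : ℝ, q₄ = p₄ + s • (e₄ - p₄)) ∧ (∃ s : ℝ, q₄ = p₃ + s • (p₁ - p₃)))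
    (w₁₂ w₂₃ w₃₄ w₄₁ u₁ u₂ u₃ u₄ : ℝ)
    (hw₂₃ : w₂₃ ≠ 0) (hw₄₁ : w₄₁ ≠ 0)
    (hu₁ : u₁ ≠ 0) (hu₂ : u₂ ≠ 0) (hu₃ : u₃ ≠ 0) (hu₄ : u₄ ≠ 0)
    (heq₁ : u₁ • (p₁ - e₁) + w₄₁ • (p₁ - p₄) + w₁₂ • (p₁ - p₂) = 0)
    (heq₂ : u₂ • (p₂ - e₂) + w₁₂ • (p₂ - p₁) + w₂₃ • (p₂ - p₃) = 0)
    (heq₃ : u₃ • (p₃ - e₃) + w₂₃ • (p₃ - p₂) + w₃₄ • (p₃ - p₄) = 0)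
    (heq₄ : u₄ • (p₄ - e₄) + w₃₄ • (p₄ - p₃) + w₄₁ • (p₄ - p₁) = 0)
    (α β γ δ : ℝ)
    (hα : q₁ - p₄ = α • (p₄ - q₃)) (hβ : q₃ - p₂ = β • (p₂ - q₁))
    (hγ : q₂ - p₃ = γ • (p₃ - q₄)) (hδ : q₄ - p₁ = δ • (p₁ - q₂)) :
    α * β = γ * δ := by
  obtain ⟨⟨s₁, hs₁⟩, ⟨t₁, ht₁⟩⟩ := hq₁
  obtain ⟨⟨s₂, hs₂⟩, ⟨t₂, ht₂⟩⟩ := hq₂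
  obtain ⟨⟨s₃, hs₃⟩, ⟨t₃, ht₃⟩⟩ := hq₃
  obtain ⟨⟨s₄, hs₄⟩, ⟨t₄, ht₄⟩⟩ := hq₄
  obtain ⟨hσ₁, hm₁⟩ := add_smul_eq_of_equilibrium h₁₂₄.comm_right hu₁ heq₁ hs₁ ht₁
  obtain ⟨hσ₂, hm₂⟩ := add_smul_eq_of_equilibrium h₁₂₃.comm_left hu₂ heq₂ hs₂ ht₂
  obtain ⟨hσ₃, hm₃⟩ := add_smul_eq_of_equilibrium h₂₃₄.comm_left hu₃ heq₃ hs₃ ht₃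
  obtain ⟨hσ₄, hm₄⟩ := add_smul_eq_of_equilibrium h₁₃₄.reverse_of_three hu₄ heq₄ hs₄ ht₄
  have h₄₂ : p₄ ≠ p₂ := h₁₂₄.injective.ne (by decide : (2 : Fin 3) ≠ 1)
  have h₃₁ : p₃ ≠ p₁ := h₁₃₄.injective.ne (by decide : (1 : Fin 3) ≠ 0)
  have hαβ := mul_mul_eq_of_add_smul_eq (ya := w₃₄) (yb := w₂₃) h₄₂ hσ₁ hm₁
    (by rwa [add_comm]) (by linear_combination (norm := module) hm₃) hα hβ
  have hγδ := mul_mul_eq_of_add_smul_eq (xa := w₂₃) (xb := w₁₂) h₃₁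
    (by rwa [add_comm]) (by linear_combination (norm := module) hm₂) hσ₄ hm₄ hγ hδ
  exact mul_right_cancel₀ (mul_ne_zero hw₄₁ hw₂₃) (by linear_combination hαβ - hγδ)

/-- For a framed quadrilateral in the plane with an everywhere non-zero
self-stress, the cross-ratios on the two diagonals agree:
`cr(q₁, p₄, q₃, p₂) = cr(q₂, p₃, q₄, p₁)`. -/
theorem stmt_10 (p₁ p₂ p₃ p₄ e₁ e₂ e₃ e₄ : Fin 2 → ℝ)
    (h₁₂₃ : AffineIndependent ℝ ![p₁, p₂, p₃]) (h₁₂₄ : AffineIndependent ℝ ![p₁, p₂, p₄])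
    (h₁₃₄ : AffineIndependent ℝ ![p₁, p₃, p₄]) (h₂₃₄ : AffineIndependent ℝ ![p₂, p₃, p₄])
    (he₁ : e₁ ≠ p₁) (he₂ : e₂ ≠ p₂) (he₃ : e₃ ≠ p₃) (he₄ : e₄ ≠ p₄)
    (q₁ q₂ q₃ q₄ : Fin 2 → ℝ)
    -- q_i lies on the line p_i e_i and on the diagonal p_{i-1} p_{i+1}
    (hq₁ : (∃ s : ℝ, q₁ = p₁ + s • (e₁ - p₁)) ∧ (∃ s : ℝ, q₁ = p₄ + s • (p₂ - p₄)))
    (hq₂ : (∃ s : ℝ, q₂ = p₂ + s • (e₂ - p₂)) ∧ (∃ s : ℝ, q₂ = p₁ + s • (p₃ - p₁)))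
    (hq₃ : (∃ s : ℝ, q₃ = p₃ + s • (e₃ - p₃)) ∧ (∃ s : ℝ, q₃ = p₂ + s • (p₄ - p₂)))
    (hq₄ : (∃ s : ℝ, q₄ = p₄ + s • (e₄ - p₄)) ∧ (∃ s : ℝ, q₄ = p₃ + s • (p₁ - p₃)))
    (w₁₂ w₂₃ w₃₄ w₄₁ u₁ u₂ u₃ u₄ : ℝ)
    (hw₁₂ : w₁₂ ≠ 0) (hw₂₃ : w₂₃ ≠ 0) (hw₃₄ : w₃₄ ≠ 0) (hw₄₁ : w₄₁ ≠ 0)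
    (hu₁ : u₁ ≠ 0) (hu₂ : u₂ ≠ 0) (hu₃ : u₃ ≠ 0) (hu₄ : u₄ ≠ 0)
    (heq₁ : u₁ • (p₁ - e₁) + w₄₁ • (p₁ - p₄) + w₁₂ • (p₁ - p₂) = 0)
    (heq₂ : u₂ • (p₂ - e₂) + w₁₂ • (p₂ - p₁) + w₂₃ • (p₂ - p₃) = 0)
    (heq₃ : u₃ • (p₃ - e₃) + w₂₃ • (p₃ - p₂) + w₃₄ • (p₃ - p₄) = 0)
    (heq₄ : u₄ • (p₄ - e₄) + w₃₄ • (p₄ - p₃) + w₄₁ • (p₄ - p₁) = 0)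
    (α β γ δ : ℝ)
    (hα : q₁ - p₄ = α • (p₄ - q₃)) (hβ : q₃ - p₂ = β • (p₂ - q₁))
    (hγ : q₂ - p₃ = γ • (p₃ - q₄)) (hδ : q₄ - p₁ = δ • (p₁ - q₂)) :
    α * β = γ * δ :=
  stmt_10_general p₁ p₂ p₃ p₄ e₁ e₂ e₃ e₄ h₁₂₃ h₁₂₄ h₁₃₄ h₂₃₄ q₁ q₂ q₃ q₄ hq₁ hq₂ hq₃ hq₄ w₁₂ w₂₃
    w₃₄ w₄₁ u₁ u₂ u₃ u₄ hw₂₃ hw₄₁ hu₁ hu₂ hu₃ hu₄ heq₁ heq₂ heq₃ heq₄ α β γ δ hα hβ hγ hδ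
end

section
/- Let p₁, ..., p₆ ∈ ℝ² be six distinct points, no three collinear, forming a framework of the complete bipartite graph K₃,₃ with parts {p₁, p₃, p₅} and {p₂, p₄, p₆} (each vertex trivalent). If this framework admits an everywhere non-zero self-stress, then the six points lie on a common conic, i.e., there is a nonzero quadratic polynomial Q(x,y) = ax² + bxy + cy² + dx + ey + f vanishing at all six points. -/
private lemma cons_val_five' {α : Type*} (a b c d e f : α) :
    ![a, b, c, d, e, f] (5 : Fin 6) = f := rfl

private lemma cons_val_four' {α : Type*} (a b c d e f : α) :
    ![a, b, c, d, e, f] (4 : Fin 6) = e := rfl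

/-- If a planar framework of `K₃,₃` (bipartition by parity of the index) admits
an everywhere non-zero self-stress, then the six points lie on a conic. -/
theorem stmt_11 (p : Fin 6 → Fin 2 → ℝ)
    (hinj : Function.Injective p)
    (hgen : ∀ i j k : Fin 6, i ≠ j → i ≠ k → j ≠ k →
      AffineIndependent ℝ ![p i, p j, p k])
    (w : Fin 6 → Fin 6 → ℝ)
    (hsymm : ∀ i j, w i j = w j i)
    (hself : ∀ i : Fin 6,
      ∑ j ∈ Finset.univ.filter (fun j : Fin 6 => (j : ℕ) % 2 ≠ (i : ℕ) % 2),
        w i j • (p i - p j) = 0)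
    (hnz : ∀ i j : Fin 6, (i : ℕ) % 2 ≠ (j : ℕ) % 2 → w i j ≠ 0) :
    ∃ a b c d e f : ℝ, ¬ (a = 0 ∧ b = 0 ∧ c = 0 ∧ d = 0 ∧ e = 0 ∧ f = 0) ∧
      ∀ i : Fin 6,
        a * (p i 0) ^ 2 + b * (p i 0) * (p i 1) + c * (p i 1) ^ 2 +
          d * (p i 0) + e * (p i 1) + f = 0 := by
  have h0 := hself 0
  have h1 := hself 1
  have h2 := hself 2
  have h3 := hself 3
  have h4 := hself 4
  have h5 := hself 5
  simp only [Finset.sum_filter, Fin.sum_univ_six, show ((0:Fin 6):ℕ) = 0 from rfl,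
    show ((1:Fin 6):ℕ) = 1 from rfl, show ((2:Fin 6):ℕ) = 2 from rfl,
    show ((3:Fin 6):ℕ) = 3 from rfl, show ((4:Fin 6):ℕ) = 4 from rfl,
    show ((5:Fin 6):ℕ) = 5 from rfl] at h0 h1 h2 h3 h4 h5
  norm_num at h0 h1 h2 h3 h4 h5
  rw [hsymm 1 0, hsymm 1 2, hsymm 1 4] at h1
  rw [hsymm 3 0, hsymm 3 2, hsymm 3 4] at h3
  rw [hsymm 5 0, hsymm 5 2, hsymm 5 4] at h5
  -- scalar equilibrium equations
  have e00 := congrFun h0 0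
  have e01 := congrFun h0 1
  have e10 := congrFun h1 0
  have e11 := congrFun h1 1
  have e20 := congrFun h2 0
  have e21 := congrFun h2 1
  have e30 := congrFun h3 0
  have e31 := congrFun h3 1
  have e40 := congrFun h4 0
  have e41 := congrFun h4 1
  have e50 := congrFun h5 0
  have e51 := congrFun h5 1
  simp only [Pi.add_apply, Pi.smul_apply, Pi.sub_apply, Pi.zero_apply, smul_eq_mul]
    at e00 e01 e10 e11 e20 e21 e30 e31 e40 e41 e50 e51
  -- the Veronese matrix
  set M : Matrix (Fin 6) (Fin 6) ℝ :=
    Matrix.of (fun i => ![p i 0 ^ 2, p i 0 * p i 1, p i 1 ^ 2, p i 0, p i 1, 1]) with hM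
  -- the dependency vector
  set lam : Fin 6 → ℝ :=
    ![w 0 1 + w 0 3 + w 0 5, -(w 0 1 + w 2 1 + w 4 1), w 2 1 + w 2 3 + w 2 5,
      -(w 0 3 + w 2 3 + w 4 3), w 4 1 + w 4 3 + w 4 5, -(w 0 5 + w 2 5 + w 4 5)] with hlamdef
  have hlam0 : lam 0 ≠ 0 := by
    intro h
    have hz : w 0 1 + w 0 3 + w 0 5 = 0 := by simpa [hlamdef] using h
    have hai := hgen 1 3 5 (by decide) (by decide) (by decide)
    have hzero : ∀ i ∈ (Finset.univ : Finset (Fin 3)),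
        (![w 0 1, w 0 3, w 0 5] : Fin 3 → ℝ) i = 0 := by
      refine affineIndependent_iff.mp hai Finset.univ _ ?_ ?_
      · simp [Fin.sum_univ_three]; linarith
      · funext t
        simp only [Fin.sum_univ_three, Matrix.cons_val_zero, Matrix.cons_val_one,
          Matrix.head_cons, Matrix.cons_val_two, Matrix.tail_cons, Pi.add_apply,
          Pi.smul_apply, Pi.zero_apply, smul_eq_mul]
        fin_cases t <;> simp only [Fin.zero_eta, Fin.mk_one, Fin.isValue]
        · linear_combination (-1 : ℝ) * e00 + p 0 0 * hz
        · linear_combination (-1 : ℝ) * e01 + p 0 1 * hz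
    exact hnz 0 3 (by decide) (by simpa using hzero 1 (Finset.mem_univ 1))
  have hlamne : lam ≠ 0 := fun h => hlam0 (by rw [h]; rfl)
  have hvm : Matrix.vecMul lam M = 0 := by
    funext j
    fin_cases j <;>
      simp [Matrix.vecMul, dotProduct, Fin.sum_univ_six, hM, hlamdef,
        Matrix.of_apply, cons_val_five', cons_val_four']
    · linear_combination p 0 0 * e00 - p 1 0 * e10 + p 2 0 * e20 - p 3 0 * e30 +
        p 4 0 * e40 - p 5 0 * e50
    · linear_combination (p 0 1 * e00 - p 1 1 * e10 + p 2 1 * e20 - p 3 1 * e30 +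
        p 4 1 * e40 - p 5 1 * e50 + p 0 0 * e01 - p 1 0 * e11 + p 2 0 * e21 -
        p 3 0 * e31 + p 4 0 * e41 - p 5 0 * e51) / 2
    · linear_combination p 0 1 * e01 - p 1 1 * e11 + p 2 1 * e21 - p 3 1 * e31 +
        p 4 1 * e41 - p 5 1 * e51
    · linear_combination e00 + e20 + e40
    · linear_combination e01 + e21 + e41
    · ring
  have hdet : M.det = 0 := by
    rw [← Matrix.exists_vecMul_eq_zero_iff]
    exact ⟨lam, hlamne, hvm⟩
  obtain ⟨v, hvne, hv⟩ := Matrix.exists_mulVec_eq_zero_iff.mpr hdet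
  refine ⟨v 0, v 1, v 2, v 3, v 4, v 5, ?_, ?_⟩
  · rintro ⟨ha, hb, hc, hd, he, hf⟩
    apply hvne
    funext i
    fin_cases i <;> assumption
  · intro i
    have hi := congrFun hv i
    simp [Matrix.mulVec, dotProduct, Fin.sum_univ_six, hM,
      Matrix.of_apply, cons_val_five', cons_val_four'] at hi
    linear_combination hi
end
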